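/- arXiv:math/0510491 — 3 statements merged into one kernel-verified Lean document; each statement's English description precedes it below -/
import Mathlib

section
/- Let Z be a real-valued random variable on a finite probability space with -1 ≤ Z ≤ 1, E[Z] = 0, and E[|Z|^p] = σ^p for some p ≥ 1 and σ ≥ 0. Then P(Z > σ^p/5) ≥ σ^p/5. -/
open Finset

/-- Paley–Zygmund type inequality: a mean-zero random variable bounded by 1 with
`p`-th absolute moment `σ^p` exceeds `σ^p/5` with probability at least `σ^p/5`. -/
theorem stmt_0 {Ω : Type*} [Fintype Ω] (w : Ω → ℝ)
    (hw0 : ∀ ω, 0 ≤ w ω) (hw1 : ∑ ω, w ω = 1)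
    (Z : Ω → ℝ) (hZlb : ∀ ω, -1 ≤ Z ω) (hZub : ∀ ω, Z ω ≤ 1)
    (p σ : ℝ) (hp : 1 ≤ p) (hσ : 0 ≤ σ)
    (hmean : ∑ ω, w ω * Z ω = 0)
    (hmom : ∑ ω, w ω * |Z ω| ^ p = σ ^ p) :
    σ ^ p / 5 ≤ ∑ ω ∈ univ.filter (fun ω => σ ^ p / 5 < Z ω), w ω := by
  set s := σ ^ p with hs
  have hs0 : 0 ≤ s := Real.rpow_nonneg hσ p
  have habs : ∀ ω, |Z ω| ^ p ≤ |Z ω| := by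
    intro ω
    have h0 : (0:ℝ) ≤ |Z ω| := abs_nonneg _
    have h1 : |Z ω| ≤ 1 := abs_le.mpr ⟨hZlb ω, hZub ω⟩
    rcases eq_or_lt_of_le h0 with h | h
    · rw [← h, Real.zero_rpow (by linarith : p ≠ 0)]
    · calc |Z ω| ^ p ≤ |Z ω| ^ (1:ℝ) :=
            Real.rpow_le_rpow_of_exponent_ge h h1 hp
        _ = |Z ω| := Real.rpow_one _
  have h1 : s ≤ ∑ ω, w ω * |Z ω| := by
    rw [← hmom]
    exact Finset.sum_le_sum fun ω _ =>
      mul_le_mul_of_nonneg_left (habs ω) (hw0 ω)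
  have h2 : ∑ ω, w ω * |Z ω| = 2 * (∑ ω, w ω * max (Z ω) 0) - ∑ ω, w ω * Z ω := by
    rw [Finset.mul_sum, ← Finset.sum_sub_distrib]
    refine Finset.sum_congr rfl fun ω _ => ?_
    rcases le_total (Z ω) 0 with h | h
    · rw [abs_of_nonpos h, max_eq_right h]; ring
    · rw [abs_of_nonneg h, max_eq_left h]; ring
  have hplus : s / 2 ≤ ∑ ω, w ω * max (Z ω) 0 := by
    rw [h2, hmean] at h1; linarith
  set A := univ.filter (fun ω => s / 5 < Z ω) with hA
  have hsplit :
      (∑ ω ∈ A, w ω * max (Z ω) 0)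
        + ∑ ω ∈ univ.filter (fun ω => ¬ s / 5 < Z ω), w ω * max (Z ω) 0
        = ∑ ω, w ω * max (Z ω) 0 :=
    Finset.sum_filter_add_sum_filter_not _ _ _
  have hAle : ∑ ω ∈ A, w ω * max (Z ω) 0 ≤ ∑ ω ∈ A, w ω := by
    refine Finset.sum_le_sum fun ω _ => ?_
    have : max (Z ω) 0 ≤ 1 := max_le (hZub ω) zero_le_one
    nlinarith [hw0 ω]
  have hBle : ∑ ω ∈ univ.filter (fun ω => ¬ s / 5 < Z ω), w ω * max (Z ω) 0
      ≤ s / 5 := by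
    calc ∑ ω ∈ univ.filter (fun ω => ¬ s / 5 < Z ω), w ω * max (Z ω) 0
        ≤ ∑ ω ∈ univ.filter (fun ω => ¬ s / 5 < Z ω), w ω * (s / 5) := by
          refine Finset.sum_le_sum fun ω hω => ?_
          have hω' := (Finset.mem_filter.mp hω).2
          push_neg at hω'
          have : max (Z ω) 0 ≤ s / 5 := max_le hω' (by linarith)
          nlinarith [hw0 ω]
      _ = (∑ ω ∈ univ.filter (fun ω => ¬ s / 5 < Z ω), w ω) * (s / 5) := by
          rw [Finset.sum_mul]
      _ ≤ 1 * (s / 5) := by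
          refine mul_le_mul_of_nonneg_right ?_ (by linarith)
          rw [← hw1]
          exact Finset.sum_le_sum_of_subset_of_nonneg (Finset.filter_subset _ _)
            (fun ω _ _ => hw0 ω)
      _ = s / 5 := one_mul _
  linarith
end

section
/- Let H = F_2^n with n ≥ 1, and let X ⊆ H. Then there is a partition of H into two affine subspaces H' and H'' (each of codimension 1) such that (1/2)( P(X|H')² + P(X|H'')² ) ≥ P(X|H)² + (1/8)‖X‖_Uni². -/
/-!
Choose `ξ ≠ 0` at which `|X̂(ξ)|` is largest. Its two level sets `V₀, V₁` are swapped by a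
translation, so each has size `|H|/2`, and `X̂(ξ) = |X ∩ V₀| - |X ∩ V₁|`. Writing `δᵢ = P(X|Vᵢ)`,
the density of `X` is `(δ₀ + δ₁)/2` and `‖X‖_Uni = |δ₀ - δ₁|/2`, so the parallelogram identity
`(δ₀² + δ₁²)/2 = ((δ₀ + δ₁)/2)² + ((δ₀ - δ₁)/2)²` gives the increment.
-/

open Finset

noncomputable section

/-- The group `F_2^n`. -/
abbrev H (n : ℕ) : Type := Fin n → ZMod 2

/-- The character `x ↦ (-1)^{x·ξ}`. -/
def chr {n : ℕ} (x ξ : H n) : ℝ := (-1 : ℝ) ^ ((∑ i, x i * ξ i).val)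

/-- Indicator function of a finite subset of `F_2^n`. -/
def ind {n : ℕ} (X : Finset (H n)) (x : H n) : ℝ := if x ∈ X then 1 else 0

/-- Fourier transform on `F_2^n`. -/
def fhat {n : ℕ} (f : H n → ℝ) (ξ : H n) : ℝ := ∑ x, f x * chr x ξ

/-- Density of `X` in `F_2^n`. -/
def density {n : ℕ} (X : Finset (H n)) : ℝ := (X.card : ℝ) / (Fintype.card (H n) : ℝ)

/-- Average of `f` over `F_2^n`. -/
def havg {n : ℕ} (f : H n → ℝ) : ℝ := (∑ x, f x) / (Fintype.card (H n) : ℝ)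

/-- Uniformity norm: the largest normalized nonzero Fourier coefficient. -/
def uniNorm {n : ℕ} (X : Finset (H n)) : ℝ :=
  ⨆ ξ : {ξ : H n // ξ ≠ 0}, |fhat (ind X) ξ.1| / (Fintype.card (H n) : ℝ)

variable {n : ℕ}

lemma ZMod.two_eq_zero_or_eq_one (a : ZMod 2) : a = 0 ∨ a = 1 := by
  revert a; decide

lemma chr_eq_ite (x ξ : H n) : chr x ξ = if ∑ i, x i * ξ i = 0 then 1 else -1 := by
  rcases (∑ i, x i * ξ i).two_eq_zero_or_eq_one with h | h <;> simp [chr, h, ZMod.val_one]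

lemma fhat_ind_eq_card_sub (X : Finset (H n)) (ξ : H n) :
    fhat (ind X) ξ =
      (#(X.filter fun x => ∑ i, x i * ξ i = 0) : ℝ) - #(X.filter fun x => ∑ i, x i * ξ i ≠ 0) := by
  simp only [fhat, ind, chr_eq_ite, ite_mul, one_mul, zero_mul, sum_ite_mem, univ_inter,
    sum_ite, sum_const, nsmul_eq_mul, mul_one, mul_neg]
  ring

lemma card_filter_dot_eq_zero_eq_card_filter_dot_ne_zero {ξ : H n} (hξ : ξ ≠ 0) :
    #((univ : Finset (H n)).filter fun x => ∑ i, x i * ξ i = 0) =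
      #((univ : Finset (H n)).filter fun x => ∑ i, x i * ξ i ≠ 0) := by
  obtain ⟨j, hj⟩ := Function.ne_iff.mp hξ
  have hj : ξ j = 1 := (ξ j).two_eq_zero_or_eq_one.resolve_left hj
  -- translation by the basis vector `e_j` swaps the two level sets of `ξ`
  have shift (x : H n) : ∑ i, (x + Pi.single j 1 : H n) i * ξ i = ∑ i, x i * ξ i + 1 := by
    change (x + Pi.single j 1) ⬝ᵥ ξ = x ⬝ᵥ ξ + 1
    rw [add_dotProduct, single_dotProduct, hj, one_mul]
  refine card_equiv (Equiv.addRight (Pi.single j 1)) fun x => ?_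
  simp only [mem_filter, mem_univ, true_and, Equiv.coe_addRight, shift]
  rcases (∑ i, x i * ξ i).two_eq_zero_or_eq_one with h | h <;>
    simp [h, CharTwo.add_self_eq_zero]

lemma card_eq_two_mul_card_filter_dot_eq_zero {ξ : H n} (hξ : ξ ≠ 0) :
    Fintype.card (H n) = 2 * #((univ : Finset (H n)).filter fun x => ∑ i, x i * ξ i = 0) := by
  rw [← card_univ, ← card_filter_add_card_filter_not (p := fun x : H n => ∑ i, x i * ξ i = 0),
    ← card_filter_dot_eq_zero_eq_card_filter_dot_ne_zero hξ, two_mul]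

lemma exists_uniNorm_eq (hn : 1 ≤ n) (X : Finset (H n)) :
    ∃ ξ : H n, ξ ≠ 0 ∧ uniNorm X = |fhat (ind X) ξ| / Fintype.card (H n) := by
  have : Nonempty {ξ : H n // ξ ≠ 0} :=
    ⟨⟨fun _ => 1, Function.ne_iff.mpr ⟨⟨0, hn⟩, one_ne_zero⟩⟩⟩
  let f (ξ : {ξ : H n // ξ ≠ 0}) : ℝ := |fhat (ind X) ξ.1| / Fintype.card (H n)
  obtain ⟨ξ, hξ⟩ := Finite.exists_max f
  exact ⟨ξ.1, ξ.2, le_antisymm (ciSup_le hξ) (le_ciSup (Set.finite_range f).bddAbove ξ)⟩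

lemma sq_add_sq_eq_half_sum_sq (a₀ a₁ b : ℝ) (hb : b ≠ 0) :
    ((a₀ + a₁) / (2 * b)) ^ 2 + ((a₀ - a₁) / (2 * b)) ^ 2 =
      1 / 2 * ((a₀ / b) ^ 2 + (a₁ / b) ^ 2) := by
  field_simp
  ring

/-- There is a partition of `F_2^n` into two codimension-one affine subspaces
(the level sets of a nonzero linear functional `ξ`) on which the mean square
density of `X` increases by `‖X‖_Uni²/8`. -/
theorem stmt_7 {n : ℕ} (hn : 1 ≤ n) (X : Finset (H n)) :
    ∃ ξ : H n, ξ ≠ 0 ∧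
      density X ^ 2 + (1 / 8) * uniNorm X ^ 2 ≤
        (1 / 2) *
          ((((X.filter (fun x => (∑ i, x i * ξ i) = 0)).card : ℝ) /
              (((univ : Finset (H n)).filter (fun x => (∑ i, x i * ξ i) = 0)).card : ℝ)) ^ 2 +
           (((X.filter (fun x => (∑ i, x i * ξ i) ≠ 0)).card : ℝ) /
              (((univ : Finset (H n)).filter (fun x => (∑ i, x i * ξ i) ≠ 0)).card : ℝ)) ^ 2) := by
  obtain ⟨ξ, hξ, hu⟩ := exists_uniNorm_eq hn X
  refine ⟨ξ, hξ, ?_⟩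
  rw [← card_filter_dot_eq_zero_eq_card_filter_dot_ne_zero hξ]
  set a₀ := #(X.filter fun x => ∑ i, x i * ξ i = 0)
  set a₁ := #(X.filter fun x => ∑ i, x i * ξ i ≠ 0)
  set b := #((univ : Finset (H n)).filter fun x => ∑ i, x i * ξ i = 0)
  have hN : Fintype.card (H n) = 2 * b := card_eq_two_mul_card_filter_dot_eq_zero hξ
  have hX : #X = a₀ + a₁ := (card_filter_add_card_filter_not _).symm
  have hb : (0 : ℝ) < b := by
    have : 0 < Fintype.card (H n) := Fintype.card_pos
    exact_mod_cast (by omega : 0 < b)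
  have hu_sq : uniNorm X ^ 2 = ((a₀ - a₁ : ℝ) / (2 * b)) ^ 2 := by
    rw [hu, fhat_ind_eq_card_sub, hN, div_pow, sq_abs, ← div_pow, Nat.cast_mul, Nat.cast_two]
  calc density X ^ 2 + 1 / 8 * uniNorm X ^ 2
      ≤ ((a₀ + a₁ : ℝ) / (2 * b)) ^ 2 + ((a₀ - a₁ : ℝ) / (2 * b)) ^ 2 := by
        rw [density, hX, hN, hu_sq, Nat.cast_add, Nat.cast_mul, Nat.cast_two]
        linarith [sq_nonneg ((a₀ - a₁ : ℝ) / (2 * b))]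
    _ = _ := sq_add_sq_eq_half_sum_sq _ _ _ hb.ne'
end
end

section
/- Let H = F_2^n and X, Y, D ⊆ H with densities δ_X, δ_Y, δ_D, and suppose ‖X‖_Uni, ‖Y‖_Uni, ‖D‖_Uni ≤ υ. Then | E_{x,y,s∈H} X(x) X(x+s) Y(y) Y(y+s) D(x+y) D(s) − δ_X² δ_Y² δ_D² | ≤ C υ for an absolute constant C (e.g., C = 10). -/
open Finset

noncomputable section

/-! Write `1_A = δ_A + b_A` with `b_A` the balanced function, and `N = |H|`. For a fixed shift `s`
the sum over `x, y` has the shape `∑ f(x) g(y) h(x + y) = N⁻¹ ∑_ξ f̂ ĝ ĥ`; if `|f|, |g| ≤ 1` and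
`h = b_D` is `υ`-uniform, Parseval bounds it by `υ N²`. Replacing `1_D(x + y)` by `δ_D` therefore
costs `υ N³` and leaves `δ_D ∑_s 1_D(s) P_X(s) P_Y(s)`, where `P_A` is the autocorrelation of
`1_A`. Since `P_A - δ_A² N` is the autocorrelation of `b_A`, the sums `∑_s g(s) (P_A(s) - δ_A² N)`
with `|g| ≤ 1` are trilinear forms of the same shape, so replacing `P_Y` and then `P_X` by their
means costs `υ N³` each. -/

variable {n : ℕ}

lemma H.add_self (x : H n) : x + x = 0 :=
  funext fun i => CharTwo.add_self_eq_zero (x i)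

lemma H.add_eq_zero_iff_eq {x y : H n} : x + y = 0 ↔ x = y := by
  rw [add_eq_zero_iff_eq_neg, neg_eq_of_add_eq_zero_left (H.add_self y)]

lemma chr_eq_neg_one_pow (x ξ : H n) : chr x ξ = (-1 : ℝ) ^ (x ⬝ᵥ ξ).val := rfl

lemma chr_add_left (x y ξ : H n) : chr (x + y) ξ = chr x ξ * chr y ξ := by
  simp only [chr_eq_neg_one_pow, add_dotProduct, ZMod.val_add, ← neg_one_pow_eq_pow_mod_two,
    pow_add]

lemma chr_comm (x ξ : H n) : chr x ξ = chr ξ x := by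
  rw [chr_eq_neg_one_pow, chr_eq_neg_one_pow, dotProduct_comm]

lemma chr_zero_right (x : H n) : chr x 0 = 1 := by
  simp [chr_eq_neg_one_pow]

lemma chr_mul_self (x ξ : H n) : chr x ξ * chr x ξ = 1 := by
  rw [← chr_add_left, H.add_self, chr_comm, chr_zero_right]

lemma sum_chr_left (ξ : H n) :
    ∑ x, chr x ξ = if ξ = 0 then (Fintype.card (H n) : ℝ) else 0 := by
  split_ifs with hξ
  · simp only [hξ, chr_zero_right, sum_const, card_univ, nsmul_eq_mul, mul_one]
  obtain ⟨i, hi⟩ := Function.ne_iff.1 hξ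
  have hflip : chr (Pi.single i 1) ξ = -1 := by
    rw [chr_eq_neg_one_pow, single_dotProduct, one_mul,
      (by decide : ∀ a : ZMod 2, a ≠ 0 → a = 1) _ hi, ZMod.val_one, pow_one]
  have hshift : ∑ x, chr (x + Pi.single i 1) ξ = ∑ x, chr x ξ :=
    Fintype.sum_equiv (Equiv.addRight (Pi.single i 1)) (fun x => chr (x + Pi.single i 1) ξ)
      (chr · ξ) fun _ => rfl
  simp only [chr_add_left, hflip, mul_neg_one, sum_neg_distrib] at hshift
  linarith

lemma sum_chr_right (x : H n) :
    ∑ ξ, chr x ξ = if x = 0 then (Fintype.card (H n) : ℝ) else 0 := by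
  simp only [chr_comm x (_ : H n), sum_chr_left]

theorem sum_fhat_mul_fhat (f g : H n → ℝ) :
    ∑ ξ, fhat f ξ * fhat g ξ = Fintype.card (H n) * ∑ x, f x * g x := by
  calc ∑ ξ, fhat f ξ * fhat g ξ = ∑ ξ, ∑ x, ∑ y, f x * g y * (chr x ξ * chr y ξ) :=
        sum_congr rfl fun ξ _ => by
          rw [fhat, fhat, sum_mul_sum]
          exact sum_congr rfl fun x _ => sum_congr rfl fun y _ => by ring
    _ = ∑ x, ∑ y, f x * g y * ∑ ξ, chr (x + y) ξ := by
        rw [sum_comm]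
        refine sum_congr rfl fun x _ => ?_
        rw [sum_comm]
        simp only [mul_sum, chr_add_left]
    _ = Fintype.card (H n) * ∑ x, f x * g x := by
        simp only [sum_chr_right, H.add_eq_zero_iff_eq, mul_ite, mul_zero, sum_ite_eq, mem_univ,
          if_true, mul_sum]
        exact sum_congr rfl fun x _ => by ring

lemma fhat_conv (g h : H n → ℝ) (ξ : H n) :
    fhat (fun x => ∑ y, g y * h (x + y)) ξ = fhat g ξ * fhat h ξ := by
  have hshift (y : H n) : ∑ x, h (x + y) * chr x ξ = chr y ξ * fhat h ξ := by
    rw [fhat, mul_sum]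
    refine Fintype.sum_equiv (Equiv.addRight y) (fun x => h (x + y) * chr x ξ)
      (fun z => chr y ξ * (h z * chr z ξ)) fun x => ?_
    have := chr_mul_self y ξ
    simp only [Equiv.coe_addRight, chr_add_left]
    linear_combination -(h (x + y) * chr x ξ) * this
  calc fhat (fun x => ∑ y, g y * h (x + y)) ξ = ∑ y, g y * ∑ x, h (x + y) * chr x ξ := by
        simp only [fhat, sum_mul, mul_sum]
        rw [sum_comm]
        exact sum_congr rfl fun _ _ => sum_congr rfl fun _ _ => by ring
    _ = fhat g ξ * fhat h ξ := by
        simp only [hshift, fhat, sum_mul]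
        exact sum_congr rfl fun _ _ => by ring

theorem card_mul_sum_sum_eq_sum_fhat (f g h : H n → ℝ) :
    Fintype.card (H n) * ∑ x, ∑ y, f x * g y * h (x + y)
      = ∑ ξ, fhat f ξ * fhat g ξ * fhat h ξ := by
  simp only [mul_assoc, ← mul_sum]
  rw [← sum_fhat_mul_fhat]
  simp only [fhat_conv]

lemma sum_fhat_sq_le {f : H n → ℝ} (hf : ∀ x, |f x| ≤ 1) :
    ∑ ξ, fhat f ξ ^ 2 ≤ (Fintype.card (H n) : ℝ) ^ 2 := by
  calc ∑ ξ, fhat f ξ ^ 2 = Fintype.card (H n) * ∑ x, f x ^ 2 := by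
        simpa only [sq] using sum_fhat_mul_fhat f f
    _ ≤ Fintype.card (H n) * ∑ _x : H n, 1 := by
        gcongr with x
        exact (sq_le_one_iff_abs_le_one _).2 (hf x)
    _ = (Fintype.card (H n) : ℝ) ^ 2 := by simp [sq]

lemma abs_mul_le_add_sq_div_two (a b : ℝ) : |a * b| ≤ (a ^ 2 + b ^ 2) / 2 := by
  have := two_mul_le_add_sq |a| |b|
  rw [sq_abs, sq_abs] at this
  rw [abs_mul]
  linarith

theorem abs_sum_sum_mul_le_of_abs_fhat_le {f g h : H n → ℝ} {ε : ℝ} (hf : ∀ x, |f x| ≤ 1)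
    (hg : ∀ y, |g y| ≤ 1) (hh : ∀ ξ, |fhat h ξ| ≤ ε * Fintype.card (H n)) :
    |∑ x, ∑ y, f x * g y * h (x + y)| ≤ ε * (Fintype.card (H n) : ℝ) ^ 2 := by
  set N : ℝ := (Fintype.card (H n) : ℝ)
  have hN : 0 < N := by positivity
  have hεN : 0 ≤ ε * N := (abs_nonneg _).trans (hh 0)
  refine le_of_mul_le_mul_left ?_ hN
  calc N * |∑ x, ∑ y, f x * g y * h (x + y)| = |∑ ξ, fhat f ξ * fhat g ξ * fhat h ξ| := by
        rw [← card_mul_sum_sum_eq_sum_fhat, abs_mul, abs_of_pos hN]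
    _ ≤ ∑ ξ, (fhat f ξ ^ 2 + fhat g ξ ^ 2) / 2 * (ε * N) := by
        refine (abs_sum_le_sum_abs _ _).trans (sum_le_sum fun ξ _ => ?_)
        rw [abs_mul]
        exact mul_le_mul (abs_mul_le_add_sq_div_two _ _) (hh ξ) (abs_nonneg _) (by positivity)
    _ = (∑ ξ, fhat f ξ ^ 2 + ∑ ξ, fhat g ξ ^ 2) / 2 * (ε * N) := by
        rw [← sum_mul, ← sum_div, sum_add_distrib]
    _ ≤ (N ^ 2 + N ^ 2) / 2 * (ε * N) := by
        gcongr
        exacts [sum_fhat_sq_le hf, sum_fhat_sq_le hg]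
    _ = N * (ε * N ^ 2) := by ring

lemma ind_nonneg (A : Finset (H n)) (x : H n) : 0 ≤ ind A x := by
  unfold ind; split_ifs <;> norm_num

lemma ind_le_one (A : Finset (H n)) (x : H n) : ind A x ≤ 1 := by
  unfold ind; split_ifs <;> norm_num

lemma abs_ind_le_one (A : Finset (H n)) (x : H n) : |ind A x| ≤ 1 :=
  abs_le.2 ⟨by linarith [ind_nonneg A x], ind_le_one A x⟩

lemma sum_ind (A : Finset (H n)) : ∑ x, ind A x = A.card := by
  simp [ind]

lemma sum_ind_add_right (A : Finset (H n)) (s : H n) : ∑ x, ind A (x + s) = A.card :=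
  (Fintype.sum_equiv (Equiv.addRight s) (fun x => ind A (x + s)) (ind A) fun _ => rfl).trans
    (sum_ind A)

lemma card_eq_density_mul (A : Finset (H n)) :
    (A.card : ℝ) = density A * Fintype.card (H n) := by
  rw [density, div_mul_cancel₀ _ (by positivity)]

lemma density_nonneg (A : Finset (H n)) : 0 ≤ density A := by
  unfold density; positivity

lemma density_le_one (A : Finset (H n)) : density A ≤ 1 := by
  rw [density, div_le_one (by positivity)]
  exact_mod_cast A.card_le_univ

lemma uniNorm_nonneg (A : Finset (H n)) : 0 ≤ uniNorm A :=
  Real.iSup_nonneg fun _ => by positivity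

lemma abs_fhat_le_uniNorm_mul (A : Finset (H n)) {ξ : H n} (hξ : ξ ≠ 0) :
    |fhat (ind A) ξ| ≤ uniNorm A * Fintype.card (H n) := by
  have hle : |fhat (ind A) ξ| / Fintype.card (H n) ≤ uniNorm A :=
    le_ciSup (f := fun ζ : {ζ : H n // ζ ≠ 0} => |fhat (ind A) ζ.1| / Fintype.card (H n))
      (Set.finite_range _).bddAbove ⟨ξ, hξ⟩
  rwa [div_le_iff₀ (by positivity)] at hle

def balancedInd (A : Finset (H n)) (x : H n) : ℝ := ind A x - density A

lemma abs_balancedInd_le_one (A : Finset (H n)) (x : H n) : |balancedInd A x| ≤ 1 :=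
  abs_sub_le_iff.2 ⟨by linarith [ind_le_one A x, density_nonneg A],
    by linarith [ind_nonneg A x, density_le_one A]⟩

lemma fhat_balancedInd (A : Finset (H n)) (ξ : H n) :
    fhat (balancedInd A) ξ = if ξ = 0 then 0 else fhat (ind A) ξ := by
  simp only [fhat, balancedInd, sub_mul, sum_sub_distrib, ← mul_sum, sum_chr_left]
  split_ifs with hξ
  · simp only [hξ, chr_zero_right, mul_one, sum_ind, card_eq_density_mul, sub_self]
  · rw [mul_zero, sub_zero]

lemma abs_fhat_balancedInd_le {A : Finset (H n)} {υ : ℝ} (hA : uniNorm A ≤ υ) (ξ : H n) :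
    |fhat (balancedInd A) ξ| ≤ υ * Fintype.card (H n) := by
  rw [fhat_balancedInd]
  split_ifs with hξ
  · rw [abs_zero]
    exact mul_nonneg ((uniNorm_nonneg A).trans hA) (by positivity)
  · exact (abs_fhat_le_uniNorm_mul A hξ).trans (by gcongr)

def autocorr (A : Finset (H n)) (s : H n) : ℝ := ∑ x, ind A x * ind A (x + s)

lemma autocorr_nonneg (A : Finset (H n)) (s : H n) : 0 ≤ autocorr A s :=
  sum_nonneg fun x _ => mul_nonneg (ind_nonneg A x) (ind_nonneg A _)

lemma autocorr_le_card (A : Finset (H n)) (s : H n) : autocorr A s ≤ Fintype.card (H n) := by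
  calc autocorr A s ≤ ∑ _x : H n, (1 : ℝ) :=
        sum_le_sum fun x _ => mul_le_one₀ (ind_le_one A x) (ind_nonneg A _) (ind_le_one A _)
    _ = Fintype.card (H n) := by simp

lemma autocorr_sub_eq_sum_balancedInd (A : Finset (H n)) (s : H n) :
    autocorr A s - density A ^ 2 * Fintype.card (H n)
      = ∑ x, balancedInd A x * balancedInd A (x + s) := by
  simp only [autocorr, balancedInd, sub_mul, mul_sub, sum_sub_distrib, ← sum_mul, ← mul_sum,
    sum_const, card_univ, nsmul_eq_mul, sum_ind, sum_ind_add_right, card_eq_density_mul]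
  ring

theorem abs_sum_mul_autocorr_sub_le {A : Finset (H n)} {υ : ℝ} {g : H n → ℝ}
    (hA : uniNorm A ≤ υ) (hg : ∀ s, |g s| ≤ 1) :
    |∑ s, g s * (autocorr A s - density A ^ 2 * Fintype.card (H n))|
      ≤ υ * (Fintype.card (H n) : ℝ) ^ 2 := by
  have hswap : ∑ s, g s * (autocorr A s - density A ^ 2 * Fintype.card (H n))
      = ∑ x, ∑ s, balancedInd A x * g s * balancedInd A (x + s) := by
    simp only [autocorr_sub_eq_sum_balancedInd, mul_sum]
    rw [sum_comm]
    exact sum_congr rfl fun _ _ => sum_congr rfl fun _ _ => by ring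
  rw [hswap]
  exact abs_sum_sum_mul_le_of_abs_fhat_le (abs_balancedInd_le_one A) hg
    (abs_fhat_balancedInd_le hA)

def cornerCount (X Y D : Finset (H n)) : ℝ :=
  ∑ x, ∑ y, ∑ s, ind X x * ind X (x + s) * ind Y y * ind Y (y + s) * ind D (x + y) * ind D s

def cornerDefect (X Y D : Finset (H n)) (s : H n) : ℝ :=
  ∑ x, ∑ y, ind X x * ind X (x + s) * (ind Y y * ind Y (y + s)) * balancedInd D (x + y)

lemma cornerCount_eq (X Y D : Finset (H n)) :
    cornerCount X Y D = ∑ s, ind D s *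
      (density D * autocorr X s * autocorr Y s + cornerDefect X Y D s) := by
  have hswap : cornerCount X Y D = ∑ s, ∑ x, ∑ y,
      ind X x * ind X (x + s) * ind Y y * ind Y (y + s) * ind D (x + y) * ind D s :=
    (sum_congr rfl fun _ _ => sum_comm).trans sum_comm
  rw [hswap]
  refine sum_congr rfl fun s _ => ?_
  rw [autocorr, autocorr, cornerDefect, mul_assoc, sum_mul_sum, mul_sum, ← sum_add_distrib,
    mul_sum]
  refine sum_congr rfl fun x _ => ?_
  rw [mul_sum, ← sum_add_distrib, mul_sum]
  refine sum_congr rfl fun y _ => ?_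
  rw [balancedInd]
  ring

lemma abs_ind_mul_ind_le_one (A : Finset (H n)) (x y : H n) : |ind A x * ind A y| ≤ 1 := by
  rw [abs_mul]
  exact mul_le_one₀ (abs_ind_le_one A x) (abs_nonneg _) (abs_ind_le_one A y)

lemma abs_cornerDefect_le (X Y : Finset (H n)) {D : Finset (H n)} {υ : ℝ} (hD : uniNorm D ≤ υ)
    (s : H n) : |cornerDefect X Y D s| ≤ υ * (Fintype.card (H n) : ℝ) ^ 2 :=
  abs_sum_sum_mul_le_of_abs_fhat_le (abs_ind_mul_ind_le_one X · _)
    (abs_ind_mul_ind_le_one Y · _) (abs_fhat_balancedInd_le hD)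

lemma cornerCount_sub_eq (X Y D : Finset (H n)) :
    cornerCount X Y D
        - density X ^ 2 * density Y ^ 2 * density D ^ 2 * (Fintype.card (H n) : ℝ) ^ 3
      = ∑ s, ind D s * cornerDefect X Y D s
        + density D * Fintype.card (H n) * ∑ s, ind D s * autocorr X s / Fintype.card (H n)
            * (autocorr Y s - density Y ^ 2 * Fintype.card (H n))
        + density D * density Y ^ 2 * Fintype.card (H n)
            * ∑ s, ind D s * (autocorr X s - density X ^ 2 * Fintype.card (H n)) := by
  set N : ℝ := (Fintype.card (H n) : ℝ)
  have hN : N ≠ 0 := by positivity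
  have hpoint (s : H n) :
      ind D s * (density D * autocorr X s * autocorr Y s + cornerDefect X Y D s)
        = ind D s * cornerDefect X Y D s
          + density D * N * (ind D s * autocorr X s / N * (autocorr Y s - density Y ^ 2 * N))
          + density D * density Y ^ 2 * N * (ind D s * (autocorr X s - density X ^ 2 * N))
          + density X ^ 2 * density Y ^ 2 * density D * N ^ 2 * ind D s := by
    field_simp
    ring
  rw [cornerCount_eq, sum_congr rfl fun s _ => hpoint s, sum_add_distrib, sum_add_distrib,
    sum_add_distrib, ← mul_sum, ← mul_sum, ← mul_sum, sum_ind, card_eq_density_mul]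
  ring

theorem abs_cornerCount_sub_le {X Y D : Finset (H n)} {υ : ℝ} (hX : uniNorm X ≤ υ)
    (hY : uniNorm Y ≤ υ) (hD : uniNorm D ≤ υ) :
    |cornerCount X Y D - density X ^ 2 * density Y ^ 2 * density D ^ 2
        * (Fintype.card (H n) : ℝ) ^ 3| ≤ 3 * υ * (Fintype.card (H n) : ℝ) ^ 3 := by
  rw [cornerCount_sub_eq]
  set N : ℝ := (Fintype.card (H n) : ℝ)
  have hN : 0 < N := by positivity
  set E₁ := ∑ s, ind D s * cornerDefect X Y D s
  set E₂ := ∑ s, ind D s * autocorr X s / N * (autocorr Y s - density Y ^ 2 * N)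
  set E₃ := ∑ s, ind D s * (autocorr X s - density X ^ 2 * N)
  have hE₁ : |E₁| ≤ υ * N ^ 3 := by
    calc |E₁| ≤ ∑ _s : H n, 1 * (υ * N ^ 2) :=
          (abs_sum_le_sum_abs _ _).trans <| sum_le_sum fun s _ => by
            rw [abs_mul]
            exact mul_le_mul (abs_ind_le_one D s) (abs_cornerDefect_le X Y hD s) (abs_nonneg _)
              zero_le_one
      _ = υ * N ^ 3 := by simp [N]; ring
  have hE₂ : |E₂| ≤ υ * N ^ 2 := by
    refine abs_sum_mul_autocorr_sub_le hY fun s => ?_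
    have hP := autocorr_nonneg X s
    have hDs := ind_nonneg D s
    rw [abs_of_nonneg (by positivity), div_le_one hN]
    exact (mul_le_of_le_one_left hP (ind_le_one D s)).trans (autocorr_le_card X s)
  have hE₃ : |E₃| ≤ υ * N ^ 2 := abs_sum_mul_autocorr_sub_le hX (abs_ind_le_one D)
  have hδD₀ := density_nonneg D
  have hδD := density_le_one D
  have hδY : density Y ^ 2 ≤ 1 := pow_le_one₀ (density_nonneg Y) (density_le_one Y)
  calc |E₁ + density D * N * E₂ + density D * density Y ^ 2 * N * E₃|
      ≤ |E₁| + density D * N * |E₂| + density D * density Y ^ 2 * N * |E₃| := by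
        refine (abs_add_le _ _).trans (add_le_add ((abs_add_le _ _).trans
          (add_le_add le_rfl ?_)) ?_) <;> rw [abs_mul, abs_of_nonneg (by positivity)]
    _ ≤ υ * N ^ 3 + 1 * N * (υ * N ^ 2) + 1 * 1 * N * (υ * N ^ 2) := by gcongr
    _ = 3 * υ * N ^ 3 := by ring

/-- The normalized count of corners of the lattice `S = X×Y ∩ X×_diag D` is
`δ_X² δ_Y² δ_D²` up to `C·υ` for an absolute constant `C`, provided `X`, `Y`, `D`
are `υ`-uniform. -/
theorem stmt_9 :
    ∃ C : ℝ, 0 < C ∧ ∀ (n : ℕ) (X Y D : Finset (H n)) (υ : ℝ),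
      uniNorm X ≤ υ → uniNorm Y ≤ υ → uniNorm D ≤ υ →
      |(∑ x, ∑ y, ∑ s, ind X x * ind X (x + s) * ind Y y * ind Y (y + s) *
            ind D (x + y) * ind D s) / (Fintype.card (H n) : ℝ) ^ 3
          - density X ^ 2 * density Y ^ 2 * density D ^ 2| ≤ C * υ := by
  refine ⟨3, three_pos, fun n X Y D υ hX hY hD => ?_⟩
  have hN : (0 : ℝ) < (Fintype.card (H n) : ℝ) ^ 3 := by positivity
  rw [← mul_div_cancel_right₀ (density X ^ 2 * density Y ^ 2 * density D ^ 2) hN.ne',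
    ← sub_div, abs_div, abs_of_pos hN, div_le_iff₀ hN]
  exact abs_cornerCount_sub_le hX hY hD
end
end
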